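/- arXiv:2512.06446 — 8 statements merged into one kernel-verified Lean document; each statement's English description precedes it below -/
import Mathlib

section
/- Suppose b ≥ 2, N ≥ 1, m ≥ 1, and F_{m+k} = b^t · F_m + r for integers k ≥ 1, 1 ≤ t ≤ N, and 0 ≤ r < b^t. Then F_{k+1} < 2·b^N. -/
theorem fib_step_jump_value_bound (b N m k t r : ℕ)
    (hb : 2 ≤ b) (hN : 1 ≤ N) (hm : 1 ≤ m) (hk : 1 ≤ k)
    (ht1 : 1 ≤ t) (htN : t ≤ N) (hr : r < b ^ t)
    (hstep : Nat.fib (m + k) = b ^ t * Nat.fib m + r) :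
    Nat.fib (k + 1) < 2 * b ^ N := by
  obtain ⟨m', rfl⟩ : ∃ m', m = m' + 1 := ⟨m - 1, by omega⟩
  have hadd := Nat.fib_add m' k
  rw [show m' + 1 + k = m' + k + 1 by ring, hadd] at hstep
  set F := Nat.fib (m' + 1) with hF
  have hFpos : 0 < F := Nat.fib_pos.mpr (by omega)
  have hpow : b ^ t ≤ b ^ N := Nat.pow_le_pow_right (by omega) htN
  have key : F * Nat.fib (k + 1) ≤ b ^ t * F + r := by omega
  have h2 : F * Nat.fib (k + 1) < 2 * b ^ N * F :=
    calc F * Nat.fib (k + 1) ≤ b ^ t * F + r := key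
      _ < b ^ t * F + b ^ t := by omega
      _ = b ^ t * (F + 1) := by ring
      _ ≤ b ^ t * (2 * F) := by
          exact Nat.mul_le_mul_left _ (by omega)
      _ ≤ b ^ N * (2 * F) := Nat.mul_le_mul_right _ hpow
      _ = 2 * b ^ N * F := by ring
  have := Nat.lt_of_mul_lt_mul_left (a := F) (by linarith [h2] : F * Nat.fib (k+1) < F * (2 * b ^ N))
  exact this
end

section
/- Suppose b ≥ 2, N ≥ 1, m ≥ 1, and F_{m+k} = b^t · F_m + r for integers k ≥ 1, 1 ≤ t ≤ N, and 0 ≤ r < b^t. Then k ≤ 1 + log_φ(2·b^N), where φ = (1+√5)/2. -/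
/-! By the addition formula `F (m + k) ≥ F m * F (k + 1)`, while appending digits gives
`F (m + k) < 2 b ^ t * F m`; hence `F (k + 1) < 2 b ^ N`. Since `φ ^ (k - 1) ≤ F (k + 1)`,
taking `log_φ` gives the bound on `k`. -/

open Real goldenRatio

namespace Nat

theorem fib_mul_fib_succ_le_fib_add (m k : ℕ) : fib m * fib (k + 1) ≤ fib (m + k) := by
  rcases m with _ | m
  · simp
  · rw [Nat.add_right_comm, fib_add]
    exact Nat.le_add_left _ _

theorem fib_succ_lt_two_mul_of_fib_add_eq {m k c r : ℕ} (hm : 1 ≤ m) (hr : r < c)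
    (h : fib (m + k) = c * fib m + r) : fib (k + 1) < 2 * c := by
  have hfm : 0 < fib m := fib_pos.mpr hm
  refine Nat.lt_of_mul_lt_mul_left (a := fib m) ?_
  calc fib m * fib (k + 1) ≤ fib (m + k) := fib_mul_fib_succ_le_fib_add m k
    _ = c * fib m + r := h
    _ < c * fib m + c * fib m := by nlinarith
    _ = fib m * (2 * c) := by ring

end Nat

theorem goldenRatio_pow_le_goldenRatio_mul_fib_succ (k : ℕ) : φ ^ k ≤ φ * Nat.fib (k + 1) := by
  have hfib : (Nat.fib k : ℝ) ≤ Nat.fib (k + 1) := by exact_mod_cast Nat.fib_le_fib_succ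
  refine le_of_mul_le_mul_left ?_ goldenRatio_pos
  calc φ * φ ^ k = φ * Nat.fib (k + 1) + Nat.fib k := by
        rw [← pow_succ', goldenRatio_mul_fib_succ_add_fib]
    _ ≤ φ * Nat.fib (k + 1) + Nat.fib (k + 1) := by gcongr
    _ = φ * (φ * Nat.fib (k + 1)) := by rw [← mul_assoc, ← sq, goldenRatio_sq]; ring

theorem le_one_add_logb_goldenRatio_of_fib_succ_le {k : ℕ} {y : ℝ} (hy : Nat.fib (k + 1) ≤ y) :
    (k : ℝ) ≤ 1 + logb φ y := by
  have hfib : (0 : ℝ) < Nat.fib (k + 1) := by exact_mod_cast Nat.fib_pos.mpr k.succ_pos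
  calc (k : ℝ) = logb φ (φ ^ k) := by rw [logb_pow, logb_self_eq_one one_lt_goldenRatio, mul_one]
    _ ≤ logb φ (φ * y) :=
        logb_le_logb_of_le one_lt_goldenRatio (by positivity)
          ((goldenRatio_pow_le_goldenRatio_mul_fib_succ k).trans (by gcongr))
    _ = 1 + logb φ y := by
        rw [logb_mul goldenRatio_ne_zero (by linarith), logb_self_eq_one one_lt_goldenRatio]

theorem fib_step_jump_index_bound_general (b N m k t r : ℕ)
    (hb : 2 ≤ b) (hm : 1 ≤ m)
    (htN : t ≤ N) (hr : r < b ^ t)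
    (hstep : Nat.fib (m + k) = b ^ t * Nat.fib m + r) :
    (k : ℝ) ≤ 1 + Real.logb ((1 + Real.sqrt 5) / 2) (2 * (b : ℝ) ^ N) := by
  have hfib : Nat.fib (k + 1) < 2 * b ^ N :=
    (Nat.fib_succ_lt_two_mul_of_fib_add_eq hm hr hstep).trans_le
      (by gcongr; omega)
  exact le_one_add_logb_goldenRatio_of_fib_succ_le (by exact_mod_cast hfib.le)

theorem fib_step_jump_index_bound (b N m k t r : ℕ)
    (hb : 2 ≤ b) (hN : 1 ≤ N) (hm : 1 ≤ m) (hk : 1 ≤ k)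
    (ht1 : 1 ≤ t) (htN : t ≤ N) (hr : r < b ^ t)
    (hstep : Nat.fib (m + k) = b ^ t * Nat.fib m + r) :
    (k : ℝ) ≤ 1 + Real.logb ((1 + Real.sqrt 5) / 2) (2 * (b : ℝ) ^ N) :=
  fib_step_jump_index_bound_general b N m k t r hb hm htN hr hstep
end

section
/- Fix b ≥ 2 and N ≥ 1, and let m_* = ⌈log_φ(2b^N)⌉ + 4 where φ = (1+√5)/2. For all m ≥ m_*, if F_{m+k} = b^t · F_m + r with 1 ≤ t ≤ N, 0 ≤ r < b^t, and k ≥ 1, then necessarily k ≥ 2, F_{k+2} - F_{k-2} = b^t, k is odd, and r = F_{m-k}. -/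
/-!
If k > m then F_{m+k} ≥ F_{2m+1} ≥ 2 F_m², which is too large, so m = n + k. The identity
F_{m+k} + (-1)^k F_{m-k} = L_k F_m, with L_k = F_{k+2} - F_{k-2} the Lucas number, turns the
hypothesis into (L_k - b^t) F_m = r + (-1)^k F_n. Since F_m ≥ 2 b^N ≥ 2 b^t (this is what the
bound m ≥ m_* gives, through φ^(m-2) ≤ F_m), the right side is smaller than F_m in absolute
value, so both sides vanish: L_k = b^t and r = -(-1)^k F_n. For even k this forces r = F_n = 0,
i.e. m = k, and then b^t = L_m > F_m is absurd; for odd k it gives r = F_n, and k = 1 is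
excluded because L_1 = 1 would give r = F_{m-1} = 0.
-/

open Nat (fib)
open Real (logb)
open scoped goldenRatio

/-- The factor `fib (k + 2) - fib (k - 2)` is the Lucas number `L k = fib (k + 1) + fib (k - 1)`. -/
theorem Int.fib_add_add_neg_one_pow_mul_fib_sub (m k : ℤ) :
    fib (m + k) + (-1) ^ k.natAbs * fib (m - k) = (fib (k + 2) - fib (k - 2)) * fib m := by
  have hsum : fib (m + k) = fib (m - 1) * fib k + fib m * fib (k + 1) := Int.fib_add m k
  have hdiff : fib (m - k) = fib (m - 1) * fib (-k) + fib m * fib (-(k - 1)) := by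
    rw [sub_eq_add_neg m k, Int.fib_add, neg_sub, neg_add_eq_sub]
  have hlucas : fib (k + 2) - fib (k - 2) = fib (k + 1) + fib (k - 1) := by
    have := Int.fib_add_two (k - 2)
    rw [sub_add_cancel, show k - 2 + 1 = k - 1 by ring] at this
    rw [Int.fib_add_two k]; linarith
  rw [hsum, hdiff, hlucas, Int.fib_neg, Int.fib_neg]
  rcases Int.even_or_odd k with hk | hk
  · have hk' : ¬Even (k - 1) := by rw [Int.even_sub_one]; exact not_not.mpr hk
    simp only [hk, hk', if_true, if_false, Even.neg_one_pow (Int.natAbs_even.mpr hk)]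
    ring
  · have hk' : Even (k - 1) := hk.sub_odd odd_one
    simp only [Int.not_even_iff_odd.mpr hk, hk', if_true, if_false,
      Odd.neg_one_pow (Int.natAbs_odd.mpr hk)]
    ring

theorem Int.fib_add_two_sub_fib_sub_two_of_two_le {k : ℕ} (hk : 2 ≤ k) :
    Int.fib (k + 2) - Int.fib (k - 2) = ((Nat.fib (k + 2) - Nat.fib (k - 2) : ℕ) : ℤ) := by
  rw [Nat.cast_sub (Nat.fib_mono (by omega)), ← Int.fib_natCast, ← Int.fib_natCast,
    Nat.cast_sub hk]
  rfl

theorem Real.goldenRatio_pow_le_fib_add_two (n : ℕ) : φ ^ n ≤ fib (n + 2) := by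
  rw [← Real.fib_succ_sub_goldenConj_mul_fib, Nat.fib_add_two, Nat.cast_add]
  nlinarith [Real.neg_one_lt_goldenConj, (Nat.cast_nonneg (fib n) : (0:ℝ) ≤ fib n)]

theorem le_fib_of_ceil_logb_goldenRatio_add_two_le {x : ℝ} (hx : 1 ≤ x) {m : ℕ}
    (hm : ⌈logb φ x⌉ + 2 ≤ (m : ℤ)) : x ≤ fib m := by
  have h0 : 0 ≤ ⌈logb φ x⌉ := Int.ceil_nonneg (Real.logb_nonneg Real.one_lt_goldenRatio hx)
  obtain ⟨n, rfl⟩ : ∃ n, m = n + 2 := ⟨m - 2, by omega⟩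
  have hlog : logb φ x ≤ n := by
    exact_mod_cast Int.ceil_le.mp (show ⌈logb φ x⌉ ≤ (n : ℤ) by omega)
  calc x ≤ φ ^ (n : ℝ) :=
        (Real.logb_le_iff_le_rpow Real.one_lt_goldenRatio (by linarith)).mp hlog
    _ = φ ^ n := Real.rpow_natCast φ n
    _ ≤ fib (n + 2) := Real.goldenRatio_pow_le_fib_add_two n

theorem two_mul_fib_sq_le_fib_add {m k : ℕ} (h : m < k) : 2 * fib m ^ 2 ≤ fib (m + k) :=
  calc 2 * fib m ^ 2 ≤ fib (m + 1) ^ 2 + fib m ^ 2 := by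
        nlinarith [Nat.fib_le_fib_succ (n := m)]
    _ = fib (2 * m + 1) := (Nat.fib_two_mul_add_one m).symm
    _ ≤ fib (m + k) := Nat.fib_mono (by omega)

theorem two_mul_fib_le_fib_add_two (n : ℕ) : 2 * fib n ≤ fib (n + 2) := by
  rw [Nat.fib_add_two]
  linarith [Nat.fib_le_fib_succ (n := n)]

theorem Int.eq_and_eq_zero_of_sub_mul_eq {a b d s : ℤ} (h : (a - b) * d = s) (hs : |s| < d) :
    a = b ∧ s = 0 := by
  have hs0 : s = 0 := Int.eq_zero_of_abs_lt_dvd ⟨a - b, by rw [← h, mul_comm]⟩ hs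
  have hd : d ≠ 0 := ((abs_nonneg s).trans_lt hs).ne'
  exact ⟨sub_eq_zero.mp ((mul_eq_zero.mp (h.trans hs0)).resolve_right hd), hs0⟩

theorem sub_mul_fib_eq_of_fib_add_eq {n k c r : ℕ} (h : fib (n + k + k) = c * fib (n + k) + r) :
    (Int.fib (k + 2) - Int.fib (k - 2) - c) * fib (n + k) = r + (-1) ^ k * fib n := by
  have hL := Int.fib_add_add_neg_one_pow_mul_fib_sub (n + k : ℕ) k
  rw [show ((n + k : ℕ) : ℤ) - k = n by push_cast; ring, ← Nat.cast_add,
    Int.natAbs_natCast] at hL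
  simp only [Int.fib_natCast] at hL
  have hZ : (fib (n + k + k) : ℤ) = c * fib (n + k) + r := by exact_mod_cast h
  linear_combination hZ - hL

theorem lucas_eq_and_add_neg_one_pow_mul_fib_eq_zero {n k c r : ℕ} (hr : r < c)
    (hc : 2 * c ≤ fib (n + k)) (hk : 1 ≤ k) (h : fib (n + k + k) = c * fib (n + k) + r) :
    Int.fib (k + 2) - Int.fib (k - 2) = c ∧ (r : ℤ) + (-1) ^ k * fib n = 0 := by
  have hm : 3 ≤ n + k := (Nat.fib_lt_fib le_rfl).mp (by rw [Nat.fib_two]; omega)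
  refine Int.eq_and_eq_zero_of_sub_mul_eq (sub_mul_fib_eq_of_fib_add_eq h) (abs_lt.mpr ?_)
  rcases Nat.even_or_odd k with hev | hodd
  · have hk2 : 2 ≤ k := by obtain ⟨j, rfl⟩ := hev; omega
    have hn : 2 * fib n ≤ fib (n + k) :=
      (Nat.mul_le_mul_left 2 (Nat.fib_mono (show n ≤ n + k - 2 by omega))).trans
        ((two_mul_fib_le_fib_add_two _).trans_eq (by congr 1; omega))
    rw [hev.neg_one_pow]
    omega
  · have hn : fib n < fib (n + k) :=
      (Nat.fib_mono (show n ≤ n + k - 1 by omega)).trans_lt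
        ((Nat.fib_lt_fib (by omega)).mpr (by omega))
    rw [hodd.neg_one_pow]
    omega

theorem fib_rigidity_of_two_mul_le_fib {m k c r : ℕ} (hr : r < c) (hc : 2 * c ≤ fib m)
    (hk : 1 ≤ k) (h : fib (m + k) = c * fib m + r) :
    2 ≤ k ∧ fib (k + 2) - fib (k - 2) = c ∧ Odd k ∧ r = fib (m - k) := by
  have hkm : k ≤ m := by
    by_contra! hmk
    nlinarith [two_mul_fib_sq_le_fib_add hmk]
  obtain ⟨n, rfl⟩ : ∃ n, m = n + k := ⟨m - k, by omega⟩
  obtain ⟨hLc, hs⟩ := lucas_eq_and_add_neg_one_pow_mul_fib_eq_zero hr hc hk h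
  rw [Nat.add_sub_cancel]
  rcases Nat.even_or_odd k with hev | hodd
  · -- `n = 0`, and then `c = L k ≥ fib (k + 1) ≥ fib k ≥ 2 * c`
    exfalso
    rw [hev.neg_one_pow, one_mul] at hs
    obtain rfl : n = 0 := Nat.fib_eq_zero.mp (by omega)
    have hk2 : 2 ≤ k := by obtain ⟨j, rfl⟩ := hev; omega
    rw [Int.fib_add_two_sub_fib_sub_two_of_two_le hk2] at hLc
    rw [zero_add] at hc
    have := Nat.fib_add_two (n := k)
    have := Nat.fib_mono (show k - 2 ≤ k by omega)
    have := Nat.fib_mono (show k ≤ k + 1 by omega)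
    omega
  · rw [hodd.neg_one_pow] at hs
    have hrn : r = fib n := by omega
    have hk2 : 2 ≤ k := by
      by_contra! hk1
      obtain rfl : k = 1 := by omega
      rw [show Int.fib ((1 : ℕ) + 2) - Int.fib ((1 : ℕ) - 2) = 1 from rfl] at hLc
      obtain rfl : n = 0 := Nat.fib_eq_zero.mp (by omega)
      rw [zero_add, Nat.fib_one] at hc
      omega
    rw [Int.fib_add_two_sub_fib_sub_two_of_two_le hk2] at hLc
    exact ⟨hk2, by exact_mod_cast hLc, hodd, hrn⟩

theorem fib_rigidity_general (b N m k t r : ℕ)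
    (hb : 2 ≤ b)
    (hm : (⌈Real.logb ((1 + Real.sqrt 5) / 2) (2 * (b : ℝ) ^ N)⌉ + 4 : ℤ) ≤ (m : ℤ))
    (hk : 1 ≤ k) (htN : t ≤ N) (hr : r < b ^ t)
    (hstep : Nat.fib (m + k) = b ^ t * Nat.fib m + r) :
    2 ≤ k ∧ Nat.fib (k + 2) - Nat.fib (k - 2) = b ^ t ∧ Odd k ∧ r = Nat.fib (m - k) := by
  have hx : (1 : ℝ) ≤ 2 * (b : ℝ) ^ N := by
    have : (1 : ℝ) ≤ (b : ℝ) ^ N := one_le_pow₀ (by exact_mod_cast (by omega : 1 ≤ b))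
    linarith
  have hm' : ⌈logb φ (2 * (b : ℝ) ^ N)⌉ + 2 ≤ (m : ℤ) := by
    unfold Real.goldenRatio; omega
  have hbN : 2 * b ^ N ≤ fib m := by
    exact_mod_cast le_fib_of_ceil_logb_goldenRatio_add_two_le hx hm'
  have hbt : b ^ t ≤ b ^ N := Nat.pow_le_pow_right (by omega) htN
  exact fib_rigidity_of_two_mul_le_fib hr (by omega) hk hstep

theorem fib_rigidity (b N m k t r : ℕ)
    (hb : 2 ≤ b) (hN : 1 ≤ N)
    (hm : (⌈Real.logb ((1 + Real.sqrt 5) / 2) (2 * (b : ℝ) ^ N)⌉ + 4 : ℤ) ≤ (m : ℤ))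
    (hk : 1 ≤ k) (ht1 : 1 ≤ t) (htN : t ≤ N) (hr : r < b ^ t)
    (hstep : Nat.fib (m + k) = b ^ t * Nat.fib m + r) :
    2 ≤ k ∧ Nat.fib (k + 2) - Nat.fib (k - 2) = b ^ t ∧ Odd k ∧ r = Nat.fib (m - k) :=
  fib_rigidity_general b N m k t r hb hm hk htN hr hstep
end

section
/- Fix b ≥ 2 and N ≥ 1. Let K = ⌈1 + log_φ(2b^N)⌉ and n_* = max{n ≥ 0 : F_n ≤ b^N − 1}, where φ = (1+√5)/2. Then for every m ≥ n_* + K + 1, there exist no integers k ≥ 1, t with 1 ≤ t ≤ N, and r with 0 ≤ r < b^t such that F_{m+k} = b^t · F_m + r. -/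
open Real Nat

private lemma phi_pos : (0:ℝ) < (1 + Real.sqrt 5) / 2 := by
  have h5 : (0:ℝ) ≤ Real.sqrt 5 := Real.sqrt_nonneg 5
  linarith

private lemma one_lt_phi : (1:ℝ) < (1 + Real.sqrt 5) / 2 := by
  have h5 : (1:ℝ) < Real.sqrt 5 := by
    have : (1:ℝ) < 5 := by norm_num
    nlinarith [Real.sq_sqrt (show (0:ℝ) ≤ 5 by norm_num), Real.sqrt_nonneg (5:ℝ)]
  linarith

private lemma phi_sq : ((1 + Real.sqrt 5) / 2) ^ 2 = (1 + Real.sqrt 5) / 2 + 1 := by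
  have h5 : Real.sqrt 5 ^ 2 = 5 := Real.sq_sqrt (by norm_num)
  ring_nf
  nlinarith [h5]

private lemma phi_pow_le_fib : ∀ k : ℕ,
    ((1 + Real.sqrt 5) / 2) ^ k ≤ (Nat.fib (k + 2) : ℝ) := by
  have key : ∀ k : ℕ, ((1 + Real.sqrt 5) / 2) ^ k ≤ (Nat.fib (k + 2) : ℝ) ∧
      ((1 + Real.sqrt 5) / 2) ^ (k+1) ≤ (Nat.fib (k + 3) : ℝ) := by
    intro k
    induction k with
    | zero =>
      constructor
      · show ((1 + Real.sqrt 5) / 2) ^ 0 ≤ ((Nat.fib 2 : ℕ) : ℝ)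
        rw [show Nat.fib 2 = 1 from rfl]
        norm_num
      · have := one_lt_phi
        have h5 : Real.sqrt 5 ^ 2 = 5 := Real.sq_sqrt (by norm_num)
        show ((1 + Real.sqrt 5) / 2) ^ 1 ≤ ((Nat.fib 3 : ℕ) : ℝ)
        rw [show Nat.fib 3 = 2 from rfl, pow_one]
        nlinarith [Real.sqrt_nonneg (5:ℝ)]
    | succ n ih =>
      refine ⟨ih.2, ?_⟩
      have h1 : ((1 + Real.sqrt 5) / 2) ^ (n + 2) =
          ((1 + Real.sqrt 5) / 2) ^ (n+1) + ((1 + Real.sqrt 5) / 2) ^ n := by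
        have : ((1 + Real.sqrt 5) / 2) ^ (n + 2) =
            ((1 + Real.sqrt 5) / 2) ^ n * (((1 + Real.sqrt 5) / 2) ^ 2) := by ring
        rw [this, phi_sq]; ring
      have h2 : Nat.fib (n + 4) = Nat.fib (n+2) + Nat.fib (n+3) := Nat.fib_add_two
      have := ih.1; have := ih.2
      rw [show n + 1 + 3 = n + 4 from rfl, h2]
      push_cast
      rw [show n + 1 + 1 = n + 2 from rfl, h1]
      linarith
  exact fun k => (key k).1

private lemma cassini : ∀ j : ℕ,
    (Nat.fib (j+1) : ℤ) ^ 2 = (Nat.fib j : ℤ) * (Nat.fib (j+2) : ℤ) + (-1) ^ j := by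
  intro j
  induction j with
  | zero => simp
  | succ n ih =>
    have h2 : (Nat.fib (n + 3) : ℤ) = Nat.fib (n+1) + Nat.fib (n+2) := by
      exact_mod_cast (Nat.fib_add_two : Nat.fib (n+1+2) = _)
    have h1 : (Nat.fib (n + 2) : ℤ) = Nat.fib n + Nat.fib (n+1) := by
      exact_mod_cast (Nat.fib_add_two : Nat.fib (n+2) = _)
    show (Nat.fib (n+2) : ℤ)^2 = (Nat.fib (n+1) : ℤ) * (Nat.fib (n+3) : ℤ) + (-1)^(n+1)
    linear_combination (-(Nat.fib (n+1):ℤ)) * h2 - ih + (Nat.fib (n+2):ℤ) * h1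

theorem fib_no_step_large_index (b N nstar : ℕ)
    (hb : 2 ≤ b) (hN : 1 ≤ N)
    (hnstar : Nat.fib nstar ≤ b ^ N - 1 ∧ ∀ n : ℕ, Nat.fib n ≤ b ^ N - 1 → n ≤ nstar)
    (m : ℕ)
    (hm : (nstar : ℤ) + ⌈1 + Real.logb ((1 + Real.sqrt 5) / 2) (2 * (b : ℝ) ^ N)⌉ + 1 ≤ (m : ℤ)) :
    ¬ ∃ (k t r : ℕ), 1 ≤ k ∧ 1 ≤ t ∧ t ≤ N ∧ r < b ^ t ∧
      Nat.fib (m + k) = b ^ t * Nat.fib m + r := by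
  rintro ⟨k, t, r, hk, ht1, htN, hrlt, heq⟩
  set ph : ℝ := (1 + Real.sqrt 5) / 2 with hph
  set L : ℤ := ⌈1 + Real.logb ph (2 * (b : ℝ) ^ N)⌉ with hL
  have hbN1 : 1 ≤ b ^ N := Nat.one_le_pow _ _ (by omega)
  have hbN2 : (2:ℝ) ≤ 2 * (b:ℝ) ^ N := by
    have : (1:ℝ) ≤ (b:ℝ)^N := by exact_mod_cast hbN1
    linarith
  have hL2 : 2 ≤ L := by
    have hlogpos : 0 < Real.logb ph (2 * (b:ℝ)^N) :=
      Real.logb_pos one_lt_phi (by linarith)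
    have : (1:ℤ) < L := by
      rw [hL, Int.lt_ceil]
      push_cast
      linarith
    omega
  have hm3 : nstar + 3 ≤ m := by
    have : (nstar : ℤ) + 3 ≤ (m : ℤ) := by omega
    exact_mod_cast this
  have hfib_big : ∀ n : ℕ, nstar < n → b ^ N ≤ Nat.fib n := by
    intro n hn
    by_contra hcon
    push_neg at hcon
    have : Nat.fib n ≤ b ^ N - 1 := by omega
    have := hnstar.2 n this
    omega
  have hbt : b ^ t ≤ b ^ N := Nat.pow_le_pow_right (by omega) htN
  -- expansion of fib (m + k)
  obtain ⟨m', rfl⟩ : ∃ m', m = m' + 1 := ⟨m - 1, by omega⟩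
  have hexp : Nat.fib (m' + 1 + k) = Nat.fib m' * Nat.fib k +
      Nat.fib (m' + 1) * Nat.fib (k + 1) := by
    have := Nat.fib_add m' k
    rw [show m' + k + 1 = m' + 1 + k by ring] at this
    exact this
  have hfm : b ^ N ≤ Nat.fib (m' + 1) := hfib_big _ (by omega)
  rcases le_or_gt (Nat.fib (k+1)) (b ^ t) with hcase | hcase
  · -- hard case: fib (k+1) ≤ b^t
    -- bound on k
    have hkL : (k : ℤ) ≤ L := by
      have hphik : ph ^ (k - 1) ≤ (Nat.fib (k + 1) : ℝ) := by
        have := phi_pow_le_fib (k - 1)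
        rwa [show k - 1 + 2 = k + 1 by omega] at this
      have hfle : (Nat.fib (k+1) : ℝ) ≤ 2 * (b:ℝ)^N := by
        have : Nat.fib (k+1) ≤ b ^ N := le_trans hcase hbt
        have h1 : (Nat.fib (k+1) : ℝ) ≤ (b:ℝ)^N := by exact_mod_cast this
        nlinarith [pow_pos (show (0:ℝ) < b by positivity) N]
      have hlogb : ((k:ℝ) - 1) ≤ Real.logb ph (2 * (b:ℝ)^N) := by
        rw [Real.le_logb_iff_rpow_le one_lt_phi (by linarith)]
        have : ph ^ ((k:ℝ) - 1) = ph ^ (k - 1 : ℕ) := by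
          rw [← Real.rpow_natCast ph (k-1)]
          congr 1
          push_cast [Nat.cast_sub hk]
          ring
        rw [this]
        linarith
      have : (k : ℝ) ≤ ((L : ℤ) : ℝ) := by
        calc (k:ℝ) ≤ 1 + Real.logb ph (2 * (b:ℝ)^N) := by linarith
        _ ≤ L := Int.le_ceil _
      exact_mod_cast this
    have hsk : nstar + 1 + k ≤ m' + 1 := by
      have : (nstar : ℤ) + 1 + k ≤ (m' : ℤ) + 1 := by omega
      exact_mod_cast this
    obtain ⟨k', rfl⟩ : ∃ k', k = k' + 1 := ⟨k - 1, by omega⟩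
    obtain ⟨s', hms⟩ : ∃ s', m' = s' + 1 + k' := ⟨m' - 1 - k', by omega⟩
    have hfs : b ^ N ≤ Nat.fib (s' + 1) := hfib_big _ (by omega)
    have hfs1 : b ^ N ≤ Nat.fib (s' + 2) := hfib_big _ (by omega)
    -- expansions
    have hfm1 : Nat.fib m' = Nat.fib s' * Nat.fib k' + Nat.fib (s'+1) * Nat.fib (k'+1) := by
      rw [hms, show s' + 1 + k' = s' + k' + 1 by ring]; exact Nat.fib_add s' k'
    have hfm2 : Nat.fib (m' + 1) =
        Nat.fib s' * Nat.fib (k'+1) + Nat.fib (s'+1) * Nat.fib (k'+2) := by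
      rw [hms, show s' + 1 + k' + 1 = s' + (k' + 1) + 1 by ring]
      exact Nat.fib_add s' (k'+1)
    -- integer equation
    obtain ⟨d, hd⟩ : ∃ d : ℤ, d = (b:ℤ)^t - (Nat.fib (k'+2) : ℤ) := ⟨_, rfl⟩
    have hd0 : 0 ≤ d := by
      rw [hd]; have : ((Nat.fib (k'+2) : ℤ)) ≤ (b:ℤ)^t := by exact_mod_cast hcase
      omega
    have hZ : ((Nat.fib s' : ℤ) * Nat.fib k' + Nat.fib (s'+1) * Nat.fib (k'+1)) * Nat.fib (k'+1)
        = d * ((Nat.fib s' : ℤ) * Nat.fib (k'+1) + Nat.fib (s'+1) * Nat.fib (k'+2)) + r := by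
      have h0 : (Nat.fib (m' + 1 + (k'+1)) : ℤ) = (b:ℤ)^t * Nat.fib (m'+1) + r := by
        exact_mod_cast heq
      rw [hexp] at h0
      push_cast [hfm1, hfm2] at h0
      push_cast [hfm2]
      rw [hd]
      linarith [h0]
    obtain ⟨c, hc⟩ : ∃ c : ℤ, c = (Nat.fib k' : ℤ) - d := ⟨_, rfl⟩
    obtain ⟨e, he⟩ : ∃ e : ℤ, e = ((-1:ℤ)) ^ k' := ⟨_, rfl⟩
    have hcas := cassini k'
    have hkey : (r : ℤ) = c * ((Nat.fib s' : ℤ) * Nat.fib (k'+1) + Nat.fib (s'+1) * Nat.fib (k'+2))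
        + e * Nat.fib (s'+1) := by
      rw [hc, he]
      linear_combination (Nat.fib (s'+1) : ℤ) * hcas - hZ
    -- final contradiction
    have hS : (b:ℤ)^N ≤ (Nat.fib (s'+1) : ℤ) := by exact_mod_cast hfs
    have hS1 : (b:ℤ)^N ≤ (Nat.fib (s'+2) : ℤ) := by exact_mod_cast hfs1
    have hrZ : (r:ℤ) < (b:ℤ)^N := by
      have : r < b ^ N := lt_of_lt_of_le hrlt hbt
      exact_mod_cast this
    have hr0 : (0:ℤ) ≤ (r:ℤ) := Int.natCast_nonneg r
    have hMpos : (0:ℤ) ≤ (Nat.fib (m'+1) : ℤ) := Int.natCast_nonneg _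
    have hMZ : (Nat.fib (m'+1) : ℤ) = (Nat.fib s' : ℤ) * Nat.fib (k'+1)
        + (Nat.fib (s'+1) : ℤ) * Nat.fib (k'+2) := by exact_mod_cast hfm2
    rw [← hMZ] at hkey
    have hSltM : (Nat.fib (s'+1) : ℤ) < (Nat.fib (m'+1) : ℤ) := by
      have h1 : Nat.fib (s'+1) ≤ Nat.fib m' := Nat.fib_mono (by omega)
      have h2 : Nat.fib m' < Nat.fib (m'+1) := Nat.fib_lt_fib_succ (by omega)
      exact_mod_cast lt_of_le_of_lt h1 h2
    have hee : e = 1 ∨ e = -1 := by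
      rcases Nat.even_or_odd k' with h | h
      · left; rw [he]; exact Even.neg_one_pow h
      · right; rw [he]; exact Odd.neg_one_pow h
    have hSpos : (0:ℤ) < (Nat.fib (s'+1) : ℤ) := by
      have hb0 : (0:ℤ) < (b:ℤ)^N := by positivity
      linarith
    rcases lt_trichotomy c 0 with hc0 | hc0 | hc0
    · -- c ≤ -1 : r < 0
      have h1 : c * (Nat.fib (m'+1) : ℤ) ≤ -1 * (Nat.fib (m'+1) : ℤ) :=
        mul_le_mul_of_nonneg_right (by linarith) hMpos
      have h2 : e * (Nat.fib (s'+1) : ℤ) ≤ (Nat.fib (s'+1) : ℤ) := by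
        rcases hee with h | h <;> rw [h] <;> linarith
      have : (r:ℤ) < 0 := by rw [hkey]; linarith
      linarith
    · -- c = 0 : r = ± fib (s'+1)
      rw [hc0] at hkey
      simp only [zero_mul, zero_add] at hkey
      rcases hee with h | h <;> rw [h] at hkey
      · -- r = fib (s'+1) ≥ b^N
        rw [one_mul] at hkey
        linarith
      · -- r = -fib(s'+1) < 0
        have : (-1:ℤ) * (Nat.fib (s'+1) : ℤ) < 0 := by linarith
        linarith
    · -- c ≥ 1 : r ≥ fib(m'+1) - fib(s'+1) ≥ fib(s'+2) ≥ b^N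
      -- first: k' ≥ 1
      have hk1 : 1 ≤ k' := by
        by_contra hcon
        have hk0 : k' = 0 := by omega
        have hcle : c ≤ 0 := by
          rw [hc, hk0]
          simp only [Nat.fib_zero, Nat.cast_zero, zero_sub, neg_nonpos]
          exact hd0
        linarith
      have hMbig : (Nat.fib (s'+1) : ℤ) + (Nat.fib (s'+2) : ℤ) ≤ (Nat.fib (m'+1) : ℤ) := by
        have h1 : Nat.fib (s'+3) ≤ Nat.fib (m'+1) := Nat.fib_mono (by omega)
        have h2 : Nat.fib (s'+3) = Nat.fib (s'+1) + Nat.fib (s'+2) := Nat.fib_add_two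
        have h3 := h2 ▸ h1
        exact_mod_cast h3
      have h1 : 1 * (Nat.fib (m'+1) : ℤ) ≤ c * (Nat.fib (m'+1) : ℤ) :=
        mul_le_mul_of_nonneg_right (by linarith) hMpos
      have h2 : -(Nat.fib (s'+1) : ℤ) ≤ e * (Nat.fib (s'+1) : ℤ) := by
        rcases hee with h | h <;> rw [h] <;> linarith
      have : (b:ℤ)^N ≤ (r:ℤ) := by rw [hkey]; linarith
      linarith
  · -- easy case: b^t < fib (k+1)
    have h1 : Nat.fib (m'+1) * (b^t + 1) ≤ Nat.fib (m'+1) * Nat.fib (k+1) :=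
      Nat.mul_le_mul_left _ (by omega)
    have h2 : b ^ t * Nat.fib (m'+1) + r ≥
        Nat.fib (m'+1) * b^t + Nat.fib (m'+1) := by
      rw [← heq, hexp]
      calc Nat.fib (m'+1) * b^t + Nat.fib (m'+1) = Nat.fib (m'+1) * (b^t+1) := by ring
        _ ≤ Nat.fib (m'+1) * Nat.fib (k+1) := h1
        _ ≤ Nat.fib m' * Nat.fib k + Nat.fib (m'+1) * Nat.fib (k+1) := Nat.le_add_left _ _
    rw [mul_comm (b^t)] at h2
    have : Nat.fib (m'+1) ≤ r := by omega
    omega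
end

section
/- Fix b ≥ 2 and N ≥ 1. Any sequence m_0 < m_0 + k_1 < m_0 + k_1 + k_2 < ... of Fibonacci indices, in which each consecutive pair (m, m') satisfies F_{m'} = b^t · F_m + r for some 1 ≤ t ≤ N and 0 ≤ r < b^t (with m_0 ≥ 1), has length at most 2N·log_φ b + log_φ 2 + 4, where φ = (1+√5)/2. In particular, every at-most-N-digit-appending walk along the Fibonacci numbers in base b is finite. -/
/-! The indices of a walk increase strictly from `m₀ ≥ 1`, so its last step `F n = B * F m + r`
(`B = b ^ t ≤ b ^ N`, `r < B`) has `m ≥ L`, and it suffices to show `φ ^ m ≤ 2 φ ⁴ B ²`.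
By Binet's formula `φ ^ m (φ ^ k - B) = √5 r + ψ ^ m (ψ ^ k - B)` with `k = n - m`, which
is `O(B)`. This gives `φ ^ k = O(B)`, and since `φ ^ k` is at distance at least `φ ^ (-k-1)`
from every integer, also `φ ^ m = O(φ ^ k B) = O(B ²)`. -/

open Real goldenRatio

theorem goldenRatio_pow_add_goldenConj_pow (n : ℕ) :
    φ ^ (n + 1) + ψ ^ (n + 1) = Nat.fib (n + 1) + 2 * Nat.fib n := by
  rw [← goldenRatio_mul_fib_succ_add_fib, ← goldenConj_mul_fib_succ_add_fib]
  linear_combination (Nat.fib (n + 1) : ℝ) * goldenRatio_add_goldenConj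

theorem goldenRatio_pow_mul_abs_goldenConj_pow (n : ℕ) : φ ^ n * |ψ| ^ n = 1 := by
  rw [← mul_pow, abs_of_neg goldenConj_neg, mul_neg, goldenRatio_mul_goldenConj, neg_neg, one_pow]

/-- `φ ^ k` is within `φ⁻ᵏ` of the integer `φ ^ k + ψ ^ k`, and every other integer is at
distance at least `1 - φ⁻ᵏ ≥ φ⁻²`. -/
theorem one_le_goldenRatio_pow_succ_mul_abs_sub {k : ℕ} (hk : 1 ≤ k) (n : ℤ) :
    1 ≤ φ ^ (k + 1) * |φ ^ k - n| := by
  obtain ⟨j, rfl⟩ := Nat.exists_eq_add_of_le' hk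
  set ℓ : ℤ := Nat.fib (j + 1) + 2 * Nat.fib j
  have hℓ : φ ^ (j + 1) - ℓ = -ψ ^ (j + 1) := by
    push_cast [ℓ]; linarith [goldenRatio_pow_add_goldenConj_pow j]
  have hinv := goldenRatio_pow_mul_abs_goldenConj_pow (j + 1)
  rcases eq_or_ne n ℓ with rfl | hne
  · rw [hℓ, abs_neg, abs_pow, pow_succ]
    nlinarith [one_lt_goldenRatio]
  · have hdist : 1 - |ψ| ^ (j + 1) ≤ |φ ^ (j + 1) - n| := by
      have : (1 : ℝ) ≤ |(ℓ : ℝ) - n| := by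
        exact_mod_cast Int.one_le_abs (sub_ne_zero.mpr hne.symm)
      have := abs_sub_abs_le_abs_sub ((ℓ : ℝ) - n) (ψ ^ (j + 1))
      rw [abs_pow] at this
      calc 1 - |ψ| ^ (j + 1) ≤ |(ℓ : ℝ) - n| - |ψ| ^ (j + 1) := by linarith
        _ ≤ _ := this.trans_eq (by congr 1; linarith)
    have hsq : φ ^ 2 ≤ φ ^ (j + 2) := pow_le_pow_right₀ one_lt_goldenRatio.le (by omega)
    calc (1 : ℝ) = φ ^ 2 - φ := by rw [goldenRatio_sq]; ring
      _ ≤ φ ^ (j + 2) - φ := by linarith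
      _ = φ ^ (j + 1 + 1) * (1 - |ψ| ^ (j + 1)) := by
        rw [pow_succ, mul_one_sub]
        linear_combination φ * hinv
      _ ≤ _ := by gcongr

theorem goldenRatio_pow_mul_sub_eq {m k B r : ℕ} (h : Nat.fib (m + k) = B * Nat.fib m + r) :
    φ ^ m * (φ ^ k - B) = √5 * r + ψ ^ m * (ψ ^ k - B) := by
  have h' : (Nat.fib (m + k) : ℝ) = B * Nat.fib m + r := by exact_mod_cast h
  rw [coe_fib_eq, coe_fib_eq] at h'
  field_simp at h'
  linear_combination h'

theorem goldenRatio_pow_mul_abs_sub_le {m k B r : ℕ} (hm : 1 ≤ m) (hr : r < B)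
    (h : Nat.fib (m + k) = B * Nat.fib m + r) :
    φ ^ m * |φ ^ k - B| ≤ (√5 - ψ) * B := by
  have hψ : |ψ| = -ψ := abs_of_neg goldenConj_neg
  have hψ1 : |ψ| ≤ 1 := by rw [hψ]; linarith [neg_one_lt_goldenConj]
  have hr' : (r : ℝ) + 1 ≤ B := by exact_mod_cast hr
  have hψm : |ψ| ^ m ≤ |ψ| := pow_le_of_le_one (abs_nonneg _) hψ1 (by omega)
  have hψk : |ψ| ^ k ≤ 1 := pow_le_one₀ (abs_nonneg _) hψ1
  have h5 : |ψ| ≤ √5 := by rw [hψ]; linarith [goldenRatio_sub_goldenConj, goldenRatio_pos]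
  rw [← abs_of_pos (pow_pos goldenRatio_pos m), ← abs_mul, goldenRatio_pow_mul_sub_eq h]
  calc |√5 * r + ψ ^ m * (ψ ^ k - B)|
      ≤ √5 * r + |ψ| ^ m * (|ψ| ^ k + B) := by
        refine (abs_add_le _ _).trans (add_le_add (abs_of_nonneg (by positivity)).le ?_)
        rw [abs_mul, abs_pow]
        gcongr
        exact (abs_sub _ _).trans (by rw [abs_pow, Nat.abs_cast])
    _ ≤ √5 * (B - 1) + |ψ| * (1 + B) := by gcongr; linarith
    _ ≤ (√5 - ψ) * B := by nlinarith

theorem goldenRatio_pow_le_of_fib_eq {m n B r : ℕ} (hm : 1 ≤ m) (hmn : m < n) (hr : r < B)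
    (h : Nat.fib n = B * Nat.fib m + r) : φ ^ m ≤ 2 * φ ^ 4 * B ^ 2 := by
  obtain ⟨k, rfl⟩ := Nat.exists_eq_add_of_lt hmn
  set c := √5 - ψ
  have hconst : c * (φ + c) ≤ 2 * φ ^ 4 := by
    have h5 : √5 ^ 2 = 5 := sq_sqrt (by norm_num)
    have h2 : 2 ≤ √5 := by nlinarith [sqrt_nonneg 5]
    unfold c goldenRatio goldenConj
    nlinarith
  have hc : 0 ≤ c := by linarith [goldenConj_neg, sqrt_nonneg 5]
  have hbound : φ ^ m * |φ ^ (k + 1) - B| ≤ c * B := goldenRatio_pow_mul_abs_sub_le hm hr h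
  have hdist : 1 ≤ φ ^ (k + 1 + 1) * |φ ^ (k + 1) - B| := by
    exact_mod_cast one_le_goldenRatio_pow_succ_mul_abs_sub (Nat.le_add_left 1 k) B
  have hpow : φ * φ ^ (k + 1) ≤ (φ + c) * B := by
    have hφm : φ ≤ φ ^ m := le_self_pow₀ one_lt_goldenRatio.le (by omega)
    have : φ * (φ ^ (k + 1) - B) ≤ φ ^ m * |φ ^ (k + 1) - B| :=
      (mul_le_mul_of_nonneg_left (le_abs_self _) goldenRatio_pos.le).trans
        (mul_le_mul_of_nonneg_right hφm (abs_nonneg _))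
    linarith
  calc φ ^ m ≤ φ ^ m * (φ ^ (k + 1 + 1) * |φ ^ (k + 1) - B|) :=
        le_mul_of_one_le_right (by positivity) hdist
    _ = φ * φ ^ (k + 1) * (φ ^ m * |φ ^ (k + 1) - B|) := by ring
    _ ≤ (φ + c) * B * (c * B) := mul_le_mul hpow hbound (by positivity) (by positivity)
    _ = c * (φ + c) * B ^ 2 := by ring
    _ ≤ 2 * φ ^ 4 * B ^ 2 := mul_le_mul_of_nonneg_right hconst (by positivity)

theorem add_le_of_forall_lt_succ {f : ℕ → ℕ} {L : ℕ} (hf : ∀ j < L, f j < f (j + 1)) :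
    ∀ j ≤ L, f 0 + j ≤ f j
  | 0, _ => le_rfl
  | j + 1, hj => by have := add_le_of_forall_lt_succ hf j (by omega); have := hf j hj; omega

theorem le_logb_goldenRatio_of_pow_le {L N b : ℕ} (hb : 0 < b)
    (h : φ ^ L ≤ 2 * φ ^ 4 * b ^ (2 * N)) :
    (L : ℝ) ≤ 2 * N * logb φ b + logb φ 2 + 4 := by
  have hlog := (le_logb_iff_rpow_le one_lt_goldenRatio (by positivity)).2
    (by rwa [rpow_natCast] : φ ^ (L : ℝ) ≤ 2 * φ ^ 4 * b ^ (2 * N))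
  rw [logb_mul (by positivity) (by positivity), logb_mul (by positivity) (by positivity),
    logb_pow, logb_pow, logb_self_eq_one one_lt_goldenRatio] at hlog
  push_cast at hlog
  linarith

theorem fib_walk_length_bound_general (b N : ℕ)
    (L : ℕ) (idx : ℕ → ℕ) (h0 : 1 ≤ idx 0)
    (hmono : ∀ j < L, idx j < idx (j + 1))
    (hstep : ∀ j < L, ∃ t r : ℕ, 1 ≤ t ∧ t ≤ N ∧ r < b ^ t ∧
      Nat.fib (idx (j + 1)) = b ^ t * Nat.fib (idx j) + r) :
    (L : ℝ) ≤ 2 * N * Real.logb ((1 + Real.sqrt 5) / 2) b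
      + Real.logb ((1 + Real.sqrt 5) / 2) 2 + 4 := by
  change (L : ℝ) ≤ 2 * N * logb φ b + logb φ 2 + 4
  rcases Nat.eq_zero_or_pos L with rfl | hL
  · have : 0 ≤ logb φ b := div_nonneg (log_natCast_nonneg b) (log_nonneg one_lt_goldenRatio.le)
    have : 0 ≤ logb φ 2 := logb_nonneg one_lt_goldenRatio (by norm_num)
    push_cast
    positivity
  obtain ⟨t, r, ht, htN, hr, hfib⟩ := hstep (L - 1) (by omega)
  have hLm : L ≤ idx (L - 1) := by
    have := add_le_of_forall_lt_succ hmono (L - 1) (by omega)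
    omega
  have hb : 0 < b := Nat.pos_of_ne_zero (by rintro rfl; simp [Nat.ne_of_gt ht] at hr)
  refine le_logb_goldenRatio_of_pow_le hb ?_
  calc φ ^ L ≤ φ ^ idx (L - 1) := pow_le_pow_right₀ one_lt_goldenRatio.le hLm
    _ ≤ 2 * φ ^ 4 * ((b ^ t : ℕ) : ℝ) ^ 2 :=
      goldenRatio_pow_le_of_fib_eq (by omega) (hmono _ (by omega)) hr hfib
    _ ≤ 2 * φ ^ 4 * b ^ (2 * N) := by
      push_cast
      rw [← pow_mul]
      have hb1 : (1 : ℝ) ≤ b := Nat.one_le_cast.mpr hb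
      exact mul_le_mul_of_nonneg_left (pow_le_pow_right₀ hb1 (by omega)) (by positivity)

theorem fib_walk_length_bound (b N : ℕ) (hb : 2 ≤ b) (hN : 1 ≤ N)
    (L : ℕ) (idx : ℕ → ℕ) (h0 : 1 ≤ idx 0)
    (hmono : ∀ j < L, idx j < idx (j + 1))
    (hstep : ∀ j < L, ∃ t r : ℕ, 1 ≤ t ∧ t ≤ N ∧ r < b ^ t ∧
      Nat.fib (idx (j + 1)) = b ^ t * Nat.fib (idx j) + r) :
    (L : ℝ) ≤ 2 * N * Real.logb ((1 + Real.sqrt 5) / 2) b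
      + Real.logb ((1 + Real.sqrt 5) / 2) 2 + 4 :=
  fib_walk_length_bound_general b N L idx h0 hmono hstep
end

section
/- Fix an integer base b ≥ 2 and N ≥ 1, and let (U_n) be a Lucas sequence of the first kind with parameters (P, 1) (i.e., Q = 1) satisfying P² − 4 > 0 and U_n > 0 and strictly increasing for all sufficiently large n. Then there exists a threshold m_* such that for all m ≥ m_*, there are no integers k ≥ 1, 1 ≤ t ≤ N, 0 ≤ r < b^t with U_{m+k} = b^t·U_m + r. That is, when Q = 1, no digit-appending step is possible from any sufficiently large term of the sequence. -/
/-!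
Since `U` solves `U (n + 2) = P U (n + 1) - U n`, so do both `k ↦ U (m + k)` and `k ↦ U (m - k)`;
their sum starts with `2 U m, P U m`, hence `U m ∣ U (m + k) + U (m - k)` (this is
`U (m + k) = U m V k - U (m - k)`). A step `U (m + k) = c U m + r` would then force
`U m ∣ r + U (m - k)`. Eventually `P ≥ 3`, so the sequence at least doubles at each step; this
bounds `k` (as `2 ^ k ≤ b ^ N`) and makes `0 < r + U (m - k) ≤ r + U (m - 1) < U m` for large `m`,
contradicting the divisibility.
-/

section LucasRecurrence

variable {P : ℤ} {U : ℕ → ℤ}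

theorem dvd_add_sub_of_rec (hU : ∀ n, U (n + 2) = P * U (n + 1) - U n) {m k : ℕ} (hk : k ≤ m) :
    U m ∣ U (m + k) + U (m - k) := by
  induction k using Nat.twoStepInduction with
  | zero => exact ⟨2, by simp only [add_zero, Nat.sub_zero]; ring⟩
  | one =>
    obtain ⟨m, rfl⟩ : ∃ m', m = m' + 1 := ⟨m - 1, by omega⟩
    exact ⟨P, by rw [hU m, Nat.add_sub_cancel]; ring⟩
  | more k ih₀ ih₁ =>
    have hup := hU (m + k)
    have hdown := hU (m - (k + 2))
    rw [show m - (k + 2) + 2 = m - k by omega, show m - (k + 2) + 1 = m - (k + 1) by omega]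
      at hdown
    have hsum : U (m + (k + 2)) + U (m - (k + 2)) =
        P * (U (m + (k + 1)) + U (m - (k + 1))) - (U (m + k) + U (m - k)) := by
      rw [show m + (k + 2) = m + k + 2 by omega, hup, show m + k + 1 = m + (k + 1) by omega]
      linear_combination hdown
    rw [hsum]
    exact dvd_sub (dvd_mul_of_dvd_right (ih₁ (by omega)) P) (ih₀ (by omega))

theorem ne_mul_add_of_rec (hU : ∀ n, U (n + 2) = P * U (n + 1) - U n) {m k : ℕ} (hk : k ≤ m)
    (c r : ℤ) (h₀ : 0 < r + U (m - k)) (hlt : r + U (m - k) < U m) :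
    U (m + k) ≠ c * U m + r := by
  intro hstep
  have hdvd := dvd_add_sub_of_rec hU hk
  rw [hstep, add_assoc] at hdvd
  exact hlt.not_ge (Int.le_of_dvd h₀ ((dvd_add_right (dvd_mul_left _ c)).mp hdvd))

theorem three_le_of_rec (hU : ∀ n, U (n + 2) = P * U (n + 1) - U n) (hD : 0 < P ^ 2 - 4) {n : ℕ}
    (h₀ : 0 < U n) (h₁ : 0 < U (n + 1)) (h₂ : U (n + 1) < U (n + 2)) : 3 ≤ P := by
  have h2P : 2 ≤ P := by nlinarith [hU n]
  rcases h2P.eq_or_lt with rfl | h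
  · norm_num at hD
  · omega

theorem two_mul_le_of_rec (hU : ∀ n, U (n + 2) = P * U (n + 1) - U n) (hP : 3 ≤ P) {n : ℕ}
    (h₁ : 0 ≤ U (n + 1)) (hle : U n ≤ U (n + 1)) : 2 * U (n + 1) ≤ U (n + 2) := by
  nlinarith [hU n]

end LucasRecurrence

theorem two_pow_mul_le_of_two_mul_le {U : ℕ → ℤ} {n₀ : ℕ}
    (hd : ∀ n, n₀ ≤ n → 2 * U n ≤ U (n + 1)) {m : ℕ} (hm : n₀ ≤ m) (k : ℕ) :
    2 ^ k * U m ≤ U (m + k) := by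
  induction k with
  | zero => simp
  | succ k ih =>
    calc 2 ^ (k + 1) * U m = 2 * (2 ^ k * U m) := by ring
      _ ≤ 2 * U (m + k) := by linarith
      _ ≤ U (m + (k + 1)) := hd (m + k) (by omega)

theorem two_pow_le_of_lt_add_one_mul {U : ℕ → ℤ} {n₀ : ℕ}
    (hd : ∀ n, n₀ ≤ n → 2 * U n ≤ U (n + 1)) {m k : ℕ} (hm : n₀ ≤ m) (hUm : 0 < U m) {c : ℤ}
    (h : U (m + k) < (c + 1) * U m) : 2 ^ k ≤ c :=
  Int.lt_add_one_iff.mp <|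
    lt_of_mul_lt_mul_right ((two_pow_mul_le_of_two_mul_le hd hm k).trans_lt h) hUm.le

theorem add_sub_le_of_lt_succ {U : ℕ → ℤ} {n₀ : ℕ} (h : ∀ n, n₀ ≤ n → U n < U (n + 1))
    {a c : ℕ} (ha : n₀ ≤ a) (hac : a ≤ c) : U a + (c - a : ℕ) ≤ U c := by
  induction c, hac using Nat.le_induction with
  | base => simp
  | succ c hac ih =>
    have := h c (ha.trans hac)
    rw [Nat.sub_add_comm hac]
    push_cast
    linarith

theorem lucas_Q_one_no_step_general (b N : ℕ) (hb : 2 ≤ b)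
    (P : ℤ) (U : ℕ → ℤ)
    (hU : ∀ n : ℕ, U (n + 2) = P * U (n + 1) - U n)
    (hD : 0 < P ^ 2 - 4)
    (hpos : ∃ n₀ : ℕ, ∀ n : ℕ, n₀ ≤ n → 0 < U n ∧ U n < U (n + 1)) :
    ∃ mstar : ℕ, ∀ m : ℕ, mstar ≤ m →
      ¬ ∃ (k t r : ℕ), 1 ≤ k ∧ 1 ≤ t ∧ t ≤ N ∧ r < b ^ t ∧
        U (m + k) = (b : ℤ) ^ t * U m + (r : ℤ) := by
  obtain ⟨n₀, hpos⟩ := hpos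
  have hP : 3 ≤ P := three_le_of_rec hU hD (hpos n₀ le_rfl).1 (hpos (n₀ + 1) (by omega)).1
    (hpos (n₀ + 1) (by omega)).2
  have hdouble : ∀ n, n₀ + 1 ≤ n → 2 * U n ≤ U (n + 1) := fun n hn => by
    obtain ⟨n, rfl⟩ : ∃ n', n = n' + 1 := ⟨n - 1, by omega⟩
    exact two_mul_le_of_rec hU hP (hpos (n + 1) (by omega)).1.le (hpos n (by omega)).2.le
  have hlt : ∀ n, n₀ ≤ n → U n < U (n + 1) := fun n hn => (hpos n hn).2
  refine ⟨n₀ + b ^ N + 2, fun m hm ⟨k, t, r, hk, _, htN, hr, hstep⟩ => ?_⟩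
  have hbt : b ^ t ≤ b ^ N := Nat.pow_le_pow_right (by omega) htN
  have hr' : (r : ℤ) < U (m - 1) := by
    have := add_sub_le_of_lt_succ hlt le_rfl (show n₀ ≤ m - 1 by omega)
    have : r < m - 1 - n₀ := by omega
    linarith [(hpos n₀ le_rfl).1, (Nat.cast_lt (α := ℤ)).mpr this]
  have hUm : 2 * U (m - 1) ≤ U m := by
    simpa [show m - 1 + 1 = m by omega] using hdouble (m - 1) (by omega)
  have hkN : k < b ^ N := by
    have h2k : (2 : ℤ) ^ k ≤ (b ^ t : ℕ) :=
      two_pow_le_of_lt_add_one_mul hdouble (show n₀ + 1 ≤ m by omega) (hpos m (by omega)).1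
        (by rw [hstep]; push_cast; linarith)
    exact k.lt_two_pow_self.trans_le ((by exact_mod_cast h2k : 2 ^ k ≤ b ^ t).trans hbt)
  have hmk : U (m - k) ≤ U (m - 1) := by
    have := add_sub_le_of_lt_succ hlt (show n₀ ≤ m - k by omega) (show m - k ≤ m - 1 by omega)
    linarith [(m - 1 - (m - k)).cast_nonneg (α := ℤ)]
  refine ne_mul_add_of_rec hU (by omega) _ _ ?_ ?_ hstep
  · linarith [(hpos (m - k) (by omega)).1, r.cast_nonneg (α := ℤ)]
  · linarith

theorem lucas_Q_one_no_step (b N : ℕ) (hb : 2 ≤ b) (hN : 1 ≤ N)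
    (P : ℤ) (U : ℕ → ℤ)
    (hU0 : U 0 = 0) (hU1 : U 1 = 1)
    (hU : ∀ n : ℕ, U (n + 2) = P * U (n + 1) - U n)
    (hD : 0 < P ^ 2 - 4)
    (hpos : ∃ n₀ : ℕ, ∀ n : ℕ, n₀ ≤ n → 0 < U n ∧ U n < U (n + 1)) :
    ∃ mstar : ℕ, ∀ m : ℕ, mstar ≤ m →
      ¬ ∃ (k t r : ℕ), 1 ≤ k ∧ 1 ≤ t ∧ t ≤ N ∧ r < b ^ t ∧
        U (m + k) = (b : ℤ) ^ t * U m + (r : ℤ) :=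
  lucas_Q_one_no_step_general b N hb P U hU hD hpos
end

section
/- Suppose b ≥ 2 and t ≥ 1. If m ≥ k ≥ 2, F_{m−2} > b^t, F_{m+k} = b^t·F_m + r, and 0 ≤ r < b^t, then F_{k+2} − F_{k−2} ≤ b^t. -/
lemma fib_docagne (d : ℕ) : ∀ n, (Nat.fib (n + d + 1) : ℤ) * Nat.fib n
    - Nat.fib (n + d) * Nat.fib (n + 1) = (-1) ^ (n + 1) * Nat.fib d := by
  intro n
  induction n with
  | zero => simp
  | succ n ih =>
    have h1 : n + 1 + d + 1 = (n + d + 1) + 1 := by ring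
    have h2 : n + 1 + d = n + d + 1 := by ring
    rw [h1, h2, Nat.fib_add_two, Nat.fib_add_two]
    push_cast
    push_cast at ih
    ring_nf
    ring_nf at ih
    linarith [ih]

lemma fib_docagne_le (n d : ℕ) : Nat.fib (n + d + 1) * Nat.fib n
    ≤ Nat.fib (n + d) * Nat.fib (n + 1) + Nat.fib d := by
  have h := fib_docagne d n
  have habs : ((-1 : ℤ)) ^ (n + 1) * Nat.fib d ≤ Nat.fib d := by
    rcases Nat.even_or_odd (n + 1) with he | ho
    · rw [he.neg_one_pow]; simp
    · rw [ho.neg_one_pow]; nlinarith [Nat.fib d, (Nat.fib d : ℤ).le_refl]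
  have : (Nat.fib (n + d + 1) : ℤ) * Nat.fib n ≤ Nat.fib (n + d) * Nat.fib (n + 1) + Nat.fib d := by
    linarith
  exact_mod_cast this

theorem fib_coeff_le (b t k m r : ℕ)
    (hb : 2 ≤ b) (ht : 1 ≤ t) (hk : 2 ≤ k) (hm : k ≤ m)
    (hgrow : b ^ t < Nat.fib (m - 2))
    (hstep : Nat.fib (m + k) = b ^ t * Nat.fib m + r) (hr : r < b ^ t) :
    Nat.fib (k + 2) - Nat.fib (k - 2) ≤ b ^ t := by
  by_contra h
  push_neg at h
  -- c = fib(k+2) - fib(k-2) = fib(k+1) + fib(k-1)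
  have hc : Nat.fib (k + 2) - Nat.fib (k - 2) = Nat.fib (k + 1) + Nat.fib (k - 1) := by
    have h1 : Nat.fib (k + 2) = Nat.fib k + Nat.fib (k + 1) := Nat.fib_add_two
    have h2 : Nat.fib k = Nat.fib (k - 2) + Nat.fib (k - 1) := by
      have : k - 2 + 2 = k := by omega
      calc Nat.fib k = Nat.fib (k - 2 + 2) := by rw [this]
        _ = Nat.fib (k - 2) + Nat.fib (k - 2 + 1) := Nat.fib_add_two
        _ = Nat.fib (k - 2) + Nat.fib (k - 1) := by congr 2; omega
    omega
  rw [hc] at h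
  -- fib(m+k) = fib(m-1)*fib k + fib m * fib(k+1)
  have hmk : m + k = (m - 1) + k + 1 := by omega
  have hadd : Nat.fib (m + k) = Nat.fib (m - 1) * Nat.fib k + Nat.fib m * Nat.fib (k + 1) := by
    rw [hmk, Nat.fib_add]
    have : m - 1 + 1 = m := by omega
    rw [this]
  -- d'Ocagne bound: fib m * fib (k-1) ≤ fib (m-1) * fib k + fib (m-k)
  have hdoc : Nat.fib m * Nat.fib (k - 1) ≤ Nat.fib (m - 1) * Nat.fib k + Nat.fib (m - k) := by
    have := fib_docagne_le (k - 1) (m - k)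
    have e1 : k - 1 + (m - k) + 1 = m := by omega
    have e2 : k - 1 + (m - k) = m - 1 := by omega
    have e3 : k - 1 + 1 = k := by omega
    rw [e1, e2, e3] at this
    exact this
  -- combine: (fib(k+1)+fib(k-1)) * fib m ≤ fib(m+k) + fib(m-k)
  have hcomb : (Nat.fib (k + 1) + Nat.fib (k - 1)) * Nat.fib m
      ≤ Nat.fib (m + k) + Nat.fib (m - k) := by
    rw [hadd]
    nlinarith [hdoc, Nat.fib m, Nat.fib (k-1)]
  have hlow : (b ^ t + 1) * Nat.fib m ≤ b ^ t * Nat.fib m + r + Nat.fib (m - k) := by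
    calc (b ^ t + 1) * Nat.fib m ≤ (Nat.fib (k + 1) + Nat.fib (k - 1)) * Nat.fib m :=
          Nat.mul_le_mul_right _ (by omega)
      _ ≤ Nat.fib (m + k) + Nat.fib (m - k) := hcomb
      _ = b ^ t * Nat.fib m + r + Nat.fib (m - k) := by rw [hstep]
  have hfm : Nat.fib m ≤ r + Nat.fib (m - k) := by nlinarith
  -- but fib m = fib(m-1) + fib(m-2) > r + fib(m-k)
  have hm2 : 2 ≤ m := le_trans hk hm
  have hfib : Nat.fib m = Nat.fib (m - 2) + Nat.fib (m - 1) := by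
    have : m - 2 + 2 = m := by omega
    calc Nat.fib m = Nat.fib (m - 2 + 2) := by rw [this]
      _ = Nat.fib (m - 2) + Nat.fib (m - 2 + 1) := Nat.fib_add_two
      _ = Nat.fib (m - 2) + Nat.fib (m - 1) := by congr 2; omega
  have hmono : Nat.fib (m - k) ≤ Nat.fib (m - 2) := Nat.fib_mono (by omega)
  have hmono2 : Nat.fib (m - 2) ≤ Nat.fib (m - 1) := Nat.fib_mono (by omega)
  omega
end

section
/- Suppose m ≥ k ≥ 2, F_{m−2} > b^t with t ≥ 1 and b ≥ 2, and F_{m+k} = b^t·F_m + r with 0 ≤ r < b^t. Then F_{k+2} − F_{k−2} = b^t, k is odd, and r = F_{m−k}. -/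
lemma cassini_int (j : ℕ) :
    (Nat.fib (j+2) : ℤ) * Nat.fib j + (-1)^j = (Nat.fib (j+1))^2 := by
  induction j with
  | zero => simp
  | succ n ih =>
    have h2 : Nat.fib (n+2) = Nat.fib n + Nat.fib (n+1) := Nat.fib_add_two
    have h3 : Nat.fib (n+3) = Nat.fib (n+1) + Nat.fib (n+2) := Nat.fib_add_two
    push_cast [h3, h2] at ih ⊢
    linear_combination -ih

lemma fib_jump_int (n j : ℕ) :
    (Nat.fib (n + (j+1) + (j+1)) : ℤ) =
      ((Nat.fib (j+2) : ℤ) + Nat.fib j) * Nat.fib (n + (j+1)) + (-1)^j * Nat.fib n := by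
  have h1 := Nat.fib_add (n + (j+1)) j
  have h2 := Nat.fib_add n j
  have h3 := Nat.fib_add n (j+1)
  have e1 : n + (j+1) + j + 1 = n + (j+1) + (j+1) := by ring
  have e2 : n + j + 1 = n + (j+1) := by ring
  rw [e1] at h1
  rw [e2] at h2
  have hc := cassini_int j
  have h1' : (Nat.fib (n + (j+1) + (j+1)) : ℤ)
      = Nat.fib (n + (j+1)) * Nat.fib j + Nat.fib (n + (j+1) + 1) * Nat.fib (j+1) := by
    exact_mod_cast h1
  have h2' : (Nat.fib (n + (j+1)) : ℤ)
      = Nat.fib n * Nat.fib j + Nat.fib (n+1) * Nat.fib (j+1) := by exact_mod_cast h2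
  have h3' : (Nat.fib (n + (j+1) + 1) : ℤ)
      = Nat.fib n * Nat.fib (j+1) + Nat.fib (n+1) * Nat.fib (j+2) := by exact_mod_cast h3
  rw [h1', h2', h3']
  linear_combination -(Nat.fib n : ℤ) * hc

lemma rigid_int (B L M S R F ε : ℤ) (hε : ε = 1 ∨ ε = -1)
    (key : B * M + R = L * M + ε * S)
    (hSle : S ≤ F) (hBlt : B < F) (hMge : F + F ≤ M)
    (hR0 : 0 ≤ R) (hRB : R < B) (hS0 : 0 ≤ S) (hL0 : 0 ≤ L) :
    L = B ∧ R = ε * S := by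
  have hM0 : 0 < M := by linarith
  have hLB : L = B := by
    rcases lt_trichotomy L B with h | h | h
    · have h1 : (B - L) * M = ε * S - R := by linarith
      have hge : 1 ≤ B - L := by omega
      rcases hε with rfl | rfl
      · nlinarith
      · nlinarith
    · exact h
    · have h1 : (L - B) * M = R - ε * S := by linarith
      have hge : 1 ≤ L - B := by omega
      rcases hε with rfl | rfl
      · nlinarith
      · nlinarith
  refine ⟨hLB, ?_⟩
  rw [hLB] at key
  linarith

theorem fib_core_rigidity (b t k m r : ℕ)
    (hb : 2 ≤ b) (ht : 1 ≤ t) (hk : 2 ≤ k) (hm : k ≤ m)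
    (hgrow : b ^ t < Nat.fib (m - 2))
    (hstep : Nat.fib (m + k) = b ^ t * Nat.fib m + r) (hr : r < b ^ t) :
    Nat.fib (k + 2) - Nat.fib (k - 2) = b ^ t ∧ Odd k ∧ r = Nat.fib (m - k) := by
  obtain ⟨i, rfl⟩ : ∃ i, k = i + 2 := ⟨k - 2, by omega⟩
  obtain ⟨n, rfl⟩ : ∃ n, m = n + (i + 2) := ⟨m - (i+2), by omega⟩
  have hm2 : n + (i+2) - 2 = n + i := by omega
  have hmk : n + (i+2) - (i+2) = n := by omega
  rw [hm2] at hgrow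
  rw [hmk]
  have key := fib_jump_int n (i+1)
  have e1 : n + (i+1+1) + (i+1+1) = n + (i+2) + (i+2) := by ring
  have e2 : n + (i+1+1) = n + (i+2) := by ring
  rw [e1, e2] at key
  have key' : (b:ℤ)^t * Nat.fib (n+(i+2)) + (r:ℤ)
      = ((Nat.fib (i+3) : ℤ) + Nat.fib (i+1)) * Nat.fib (n+(i+2))
        + (-1)^(i+1) * Nat.fib n := by
    rw [← key]
    have : (Nat.fib (n + (i+2) + (i+2)) : ℤ) = (b:ℤ)^t * Nat.fib (n+(i+2)) + r := by
      exact_mod_cast hstep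
    linarith
  have hSle : (Nat.fib n : ℤ) ≤ (Nat.fib (n+i) : ℤ) := by
    exact_mod_cast Nat.fib_mono (by omega : n ≤ n + i)
  have hBlt : (b:ℤ)^t < (Nat.fib (n+i) : ℤ) := by exact_mod_cast hgrow
  have hMge : (Nat.fib (n+i) : ℤ) + (Nat.fib (n+i) : ℤ) ≤ (Nat.fib (n+(i+2)) : ℤ) := by
    have h1 : Nat.fib (n+(i+2)) = Nat.fib (n+i) + Nat.fib (n+i+1) := Nat.fib_add_two
    have h2 : Nat.fib (n+i) ≤ Nat.fib (n+i+1) := Nat.fib_mono (by omega)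
    exact_mod_cast by omega
  have hrB : (r:ℤ) < (b:ℤ)^t := by exact_mod_cast hr
  have hε : ((-1:ℤ))^(i+1) = 1 ∨ ((-1:ℤ))^(i+1) = -1 := (Nat.even_or_odd (i+1)).imp (fun h => h.neg_one_pow) (fun h => h.neg_one_pow)
  obtain ⟨hLB, hreq⟩ := rigid_int ((b:ℤ)^t) ((Nat.fib (i+3) : ℤ) + Nat.fib (i+1))
    (Nat.fib (n+(i+2))) (Nat.fib n) r (Nat.fib (n+i)) ((-1)^(i+1)) hε key'
    hSle hBlt hMge (Int.ofNat_nonneg r) hrB (Int.ofNat_nonneg _) (by positivity)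
  have hiodd : Odd i := by
    rcases Nat.even_or_odd i with hie | hio
    · exfalso
      have hsgn : ((-1:ℤ))^(i+1) = -1 := (hie.add_one).neg_one_pow
      rw [hsgn] at hreq
      have hS0 : (0:ℤ) ≤ Nat.fib n := Int.ofNat_nonneg _
      have hr0 : (0:ℤ) ≤ (r:ℤ) := Int.ofNat_nonneg r
      have hSz : (Nat.fib n : ℤ) = 0 := by linarith
      have hn0 : n = 0 := by
        rcases Nat.eq_zero_or_pos n with h | h
        · exact h
        · exact absurd (by exact_mod_cast hSz) (Nat.fib_pos.mpr h).ne'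
      subst hn0
      simp only [Nat.zero_add] at hBlt
      have hfib : (Nat.fib i : ℤ) ≤ Nat.fib (i+3) := by
        exact_mod_cast Nat.fib_mono (by omega)
      have hf1 : (0:ℤ) ≤ Nat.fib (i+1) := Int.ofNat_nonneg _
      rw [← hLB] at hBlt
      linarith
    · exact hio
  have hsgn : ((-1:ℤ))^(i+1) = 1 := (hiodd.add_one).neg_one_pow
  rw [hsgn, one_mul] at hreq
  refine ⟨?_, (by obtain ⟨c, hc⟩ := hiodd; exact ⟨c+1, by omega⟩ : Odd (i+2)), by exact_mod_cast hreq⟩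
  have hnat : Nat.fib (i+3) + Nat.fib (i+1) = b^t := by exact_mod_cast hLB
  have a1 : Nat.fib (i+4) = Nat.fib (i+2) + Nat.fib (i+3) := Nat.fib_add_two
  have a2 : Nat.fib (i+2) = Nat.fib i + Nat.fib (i+1) := Nat.fib_add_two
  have e3 : i + 2 + 2 = i + 4 := by ring
  have e4 : i + 2 - 2 = i := by omega
  rw [e3, e4]
  omega
end
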